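/- arXiv:0805.1361 — 6 statements merged into one kernel-verified Lean document; each statement's English description precedes it below -/
import Mathlib

section
/- Let m > 1 be an integer and let x, y be coprime integers with y² − 4x^m < 0. Set k = ℚ(√(y² − 4x^m)) and let z = √(y² − 4x^m) ∈ k. Then (y+z)/2 and (y−z)/2 lie in 𝒪_k, are coprime as ideals of 𝒪_k, and the ideal ((y+z)/2) is the m-th power of an ideal 𝔞 of 𝒪_k. -/
/-!
Both `(y ± z)/2` are roots of `X² − yX + x^m`, hence algebraic integers, with sum `y` and
product `x^m`. Any common divisor of them divides `y` and `x^m`, which are coprime, so they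
generate coprime ideals; in the Dedekind domain `𝒪_K` a product of coprime ideals that is an
`m`-th power has each factor an `m`-th power.
-/

open NumberField Polynomial

theorem isIntegral_of_sq_sub_mul_add_eq_zero {A : Type*} [CommRing A] (t n : ℤ) {w : A}
    (h : w ^ 2 - t * w + n = 0) : IsIntegral ℤ w := by
  refine ⟨X ^ 2 - C t * X + C n, by monicity!, ?_⟩
  simpa only [eval₂_add, eval₂_sub, eval₂_mul, eval₂_pow, eval₂_X, eval₂_C, algebraMap_int_eq,
    Int.coe_castRingHom] using h

theorem IsCoprime.of_mul_add {R : Type*} [CommRing R] {a b : R}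
    (h : IsCoprime (a * b) (a + b)) : IsCoprime a b := by
  have ha : IsCoprime a (b + a * 1) := by simpa [add_comm] using h.of_mul_left_left
  exact IsCoprime.add_mul_left_right_iff.mp ha

theorem Ideal.exists_span_singleton_eq_pow_of_isCoprime {R : Type*} [CommRing R]
    [IsDedekindDomain R] {a b c : R} {m : ℕ} (hab : IsCoprime a b) (h : a * b = c ^ m) :
    ∃ I : Ideal R, Ideal.span {a} = I ^ m := by
  refine exists_eq_pow_of_mul_eq_pow_of_coprime
    ((Ideal.isCoprime_span_singleton_iff a b).mpr hab) (c := Ideal.span {c}) ?_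
  rw [Ideal.span_singleton_mul_span_singleton, h, Ideal.span_singleton_pow]

theorem stmt_5_general (m : ℕ) (x y : ℤ) (hcop : IsCoprime x y)
    (K : Type*) [Field K] [NumberField K] (z : K)
    (hz : z ^ 2 = (y : K) ^ 2 - 4 * (x : K) ^ m) :
    ∃ α β : NumberField.RingOfIntegers K,
      algebraMap (NumberField.RingOfIntegers K) K α = ((y : K) + z) / 2 ∧
      algebraMap (NumberField.RingOfIntegers K) K β = ((y : K) - z) / 2 ∧
      Ideal.span {α} ⊔ Ideal.span {β} = ⊤ ∧
      ∃ I : Ideal (NumberField.RingOfIntegers K), Ideal.span {α} = I ^ m := by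
  let α : 𝓞 K := ⟨((y : K) + z) / 2, isIntegral_of_sq_sub_mul_add_eq_zero y (x ^ m)
    (by push_cast; linear_combination hz / 4)⟩
  let β : 𝓞 K := ⟨((y : K) - z) / 2, isIntegral_of_sq_sub_mul_add_eq_zero y (x ^ m)
    (by push_cast; linear_combination hz / 4)⟩
  have hadd : α + β = y := RingOfIntegers.coe_injective <| by
    simp only [map_add, map_intCast]
    change ((y : K) + z) / 2 + ((y : K) - z) / 2 = y
    ring
  have hmul : α * β = (x : 𝓞 K) ^ m := RingOfIntegers.coe_injective <| by
    simp only [map_mul, map_pow, map_intCast]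
    change ((y : K) + z) / 2 * (((y : K) - z) / 2) = (x : K) ^ m
    linear_combination -hz / 4
  have hαβ : IsCoprime α β := by
    refine IsCoprime.of_mul_add ?_
    rw [hadd, hmul]
    simpa using (hcop.pow_left (m := m)).map (Int.castRingHom (𝓞 K))
  exact ⟨α, β, rfl, rfl,
    Ideal.isCoprime_iff_sup_eq.mp ((Ideal.isCoprime_span_singleton_iff α β).mpr hαβ),
    Ideal.exists_span_singleton_eq_pow_of_isCoprime hαβ hmul⟩

/-- For `m > 1` and coprime integers `x, y` with `y² − 4x^m < 0`, in the imaginary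
quadratic field `K = ℚ(√(y² − 4x^m))` with `z = √(y² − 4x^m)`:  `(y+z)/2` and
`(y−z)/2` are algebraic integers generating coprime ideals, and the ideal
`((y+z)/2)` is an `m`-th power of an ideal of `𝒪_K`. -/
theorem stmt_5 (m : ℕ) (hm : 1 < m) (x y : ℤ) (hcop : IsCoprime x y)
    (hneg : y ^ 2 - 4 * x ^ m < 0)
    (K : Type*) [Field K] [NumberField K] (z : K)
    (hz : z ^ 2 = (y : K) ^ 2 - 4 * (x : K) ^ m)
    (hgen : IntermediateField.adjoin ℚ {z} = ⊤) :
    ∃ α β : NumberField.RingOfIntegers K,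
      algebraMap (NumberField.RingOfIntegers K) K α = ((y : K) + z) / 2 ∧
      algebraMap (NumberField.RingOfIntegers K) K β = ((y : K) - z) / 2 ∧
      Ideal.span {α} ⊔ Ideal.span {β} = ⊤ ∧
      ∃ I : Ideal (NumberField.RingOfIntegers K), Ideal.span {α} = I ^ m :=
  stmt_5_general m x y hcop K z hz
end

section
/- Let x, y, z be integers with gcd(x^m − y^m, z) = gcd(x^m − z^m, y) = gcd(y^m − z^m, x) = 1, where m > 1. Let f(x,y,z) = x^{2m}+y^{2m}+z^{2m}−2x^m y^m−2x^m z^m−2y^m z^m, assume f(x,y,z) is not a perfect square, let k = ℚ(√f(x,y,z)) and v = √f(x,y,z). Then the 𝒪_k-ideals ((v + x^m + y^m − z^m)/2) and ((v − x^m − y^m + z^m)/2) are coprime, and hence ((v + x^m + y^m − z^m)/2) is an m-th power of an ideal of 𝒪_k. -/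
/-!
With `s = x^m + y^m - z^m`, the two generators are `α = (v + s)/2` and `β = (v - s)/2`, so
`α - β = s` and, since `v² - s² = -4 x^m y^m`, `α β = -(x y)^m`. A common prime divisor of
`α` and `β` would therefore contain both `x y` and `s`, which are coprime integers by the
hypotheses on `gcd(y^m - z^m, x)` and `gcd(x^m - z^m, y)`. In the Dedekind domain `𝓞_K`, two
coprime ideals whose product is an `m`-th power are themselves `m`-th powers.
-/

open NumberField

theorem IsCoprime.of_mul_sub {R : Type*} [CommRing R] {a b : R}
    (h : IsCoprime (a * b) (a - b)) : IsCoprime a b :=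
  (IsCoprime.mul_sub_left_right_iff (z := 1)).mp (by simpa using h.of_mul_left_left)

theorem isCoprime_mul_pow_add_pow_sub_pow {R : Type*} [CommRing R] {x y z : R} {m : ℕ}
    (hm : m ≠ 0) (hx : IsCoprime (y ^ m - z ^ m) x) (hy : IsCoprime (x ^ m - z ^ m) y) :
    IsCoprime (x * y) (x ^ m + y ^ m - z ^ m) := by
  obtain ⟨k, rfl⟩ := Nat.exists_eq_add_one_of_ne_zero hm
  refine IsCoprime.mul_left ?_ ?_
  · convert hx.symm.add_mul_left_right (x ^ k) using 1
    ring
  · convert hy.symm.add_mul_left_right (y ^ k) using 1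
    ring

theorem Ideal.exists_span_singleton_eq_pow_of_associated_mul {A : Type*} [CommRing A]
    [IsDedekindDomain A] {a b c : A} {n : ℕ} (hab : IsCoprime a b)
    (h : Associated (a * b) (c ^ n)) : ∃ I : Ideal A, Ideal.span {a} = I ^ n := by
  refine exists_eq_pow_of_mul_eq_pow_of_coprime
    ((Ideal.isCoprime_span_singleton_iff a b).mpr hab) (c := Ideal.span {c}) ?_
  rw [Ideal.span_singleton_mul_span_singleton, Ideal.span_singleton_pow,
    Ideal.span_singleton_eq_span_singleton]
  exact h

theorem stmt_7_general (m : ℕ) (hm : 1 < m) (x y z : ℤ)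
    (h2 : IsCoprime (x ^ m - z ^ m) y)
    (h3 : IsCoprime (y ^ m - z ^ m) x)
    (K : Type*) [Field K] [NumberField K] (v : K)
    (hv : v ^ 2 = (x : K) ^ (2 * m) + (y : K) ^ (2 * m) + (z : K) ^ (2 * m)
      - 2 * (x : K) ^ m * (y : K) ^ m - 2 * (x : K) ^ m * (z : K) ^ m
      - 2 * (y : K) ^ m * (z : K) ^ m)
    (α β : NumberField.RingOfIntegers K)
    (hα : algebraMap (NumberField.RingOfIntegers K) K α
      = (v + (x : K) ^ m + (y : K) ^ m - (z : K) ^ m) / 2)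
    (hβ : algebraMap (NumberField.RingOfIntegers K) K β
      = (v - (x : K) ^ m - (y : K) ^ m + (z : K) ^ m) / 2) :
    (Ideal.span {α} ⊔ Ideal.span {β} = ⊤) ∧
    ∃ I : Ideal (NumberField.RingOfIntegers K), Ideal.span {α} = I ^ m := by
  have hinj := FaithfulSMul.algebraMap_injective (𝓞 K) K
  have hmul : α * β = -((x * y : ℤ) : 𝓞 K) ^ m := hinj <| by
    rw [map_mul, hα, hβ, map_neg, map_pow, map_intCast]
    push_cast
    linear_combination hv / 4
  have hsub : α - β = ((x ^ m + y ^ m - z ^ m : ℤ) : 𝓞 K) := hinj <| by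
    rw [map_sub, hα, hβ, map_intCast]
    push_cast
    ring
  have hcop : IsCoprime α β := by
    refine .of_mul_sub ?_
    rw [hmul, hsub, ← Int.cast_pow]
    exact ((isCoprime_mul_pow_add_pow_sub_pow (by omega) h3 h2).pow_left.intCast).neg_left
  refine ⟨Ideal.isCoprime_iff_sup_eq.mp ((Ideal.isCoprime_span_singleton_iff α β).mpr hcop),
    Ideal.exists_span_singleton_eq_pow_of_associated_mul hcop (c := ((x * y : ℤ) : 𝓞 K)) ?_⟩
  rw [hmul]
  exact Associated.neg_left (Associated.refl _)

/-- For `m > 1` and integers `x, y, z` with `gcd(x^m−y^m,z) = gcd(x^m−z^m,y) =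
gcd(y^m−z^m,x) = 1`, with `f(x,y,z)` the ternary form, not a perfect square,
`K = ℚ(√f)` and `v = √f`:  the ideals `((v+x^m+y^m−z^m)/2)` and `((v−x^m−y^m+z^m)/2)`
of `𝒪_K` are coprime, and `((v+x^m+y^m−z^m)/2)` is an `m`-th power of an ideal. -/
theorem stmt_7 (m : ℕ) (hm : 1 < m) (x y z : ℤ)
    (h1 : IsCoprime (x ^ m - y ^ m) z) (h2 : IsCoprime (x ^ m - z ^ m) y)
    (h3 : IsCoprime (y ^ m - z ^ m) x)
    (hns : ¬ ∃ w : ℤ, w ^ 2 = x ^ (2 * m) + y ^ (2 * m) + z ^ (2 * m)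
      - 2 * x ^ m * y ^ m - 2 * x ^ m * z ^ m - 2 * y ^ m * z ^ m)
    (K : Type*) [Field K] [NumberField K] (v : K)
    (hv : v ^ 2 = (x : K) ^ (2 * m) + (y : K) ^ (2 * m) + (z : K) ^ (2 * m)
      - 2 * (x : K) ^ m * (y : K) ^ m - 2 * (x : K) ^ m * (z : K) ^ m
      - 2 * (y : K) ^ m * (z : K) ^ m)
    (hgen : IntermediateField.adjoin ℚ {v} = ⊤)
    (α β : NumberField.RingOfIntegers K)
    (hα : algebraMap (NumberField.RingOfIntegers K) K α
      = (v + (x : K) ^ m + (y : K) ^ m - (z : K) ^ m) / 2)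
    (hβ : algebraMap (NumberField.RingOfIntegers K) K β
      = (v - (x : K) ^ m - (y : K) ^ m + (z : K) ^ m) / 2) :
    (Ideal.span {α} ⊔ Ideal.span {β} = ⊤) ∧
    ∃ I : Ideal (NumberField.RingOfIntegers K), Ideal.span {α} = I ^ m :=
  stmt_7_general m hm x y z h2 h3 K v hv α β hα hβ
end

section
/- Let n > 1 and let t₀, t₁, …, t_n be nonzero integers such that gcd(t₀, ∏_{1 ≤ i < j ≤ n} (t_i^m − t_j^m)) = 1 and gcd(t_i, t₀^m + (−1)^{n−1} ∏_{j≠i, j≥1} t_j^m) = 1 for each i = 1,…,n. Let x be a root of the polynomial X·t₀^m + ∏_{j=1}^n (X − t_j^m), and let k = ℚ(x). Then for each j = 1,…,n, the principal fractional ideal (x − t_j^m) of 𝒪_k is the m-th power of a fractional ideal 𝔞_j of 𝒪_k. -/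
/-!
Write `α_i = x - t_i^m`. Clearing the root equation gives
`α_j · (t₀^m + ∏_{i ≠ j} α_i) = -(t₀ t_j)^m`. A prime containing both factors would contain
`t₀` or `t_j`: if `t₀`, it contains some `α_i` with `i ≠ j`, hence `t_j^m - t_i^m`; if `t_j`, it
contains `x`, and the second factor reduces to `t₀^m + (-1)^(n-1) ∏_{i ≠ j} t_i^m`. Either way the
coprimality hypotheses are violated, so the two factors are coprime in `𝓞_K`, and unique
factorisation of ideals makes `(α_j)` an `m`-th power.
-/

open Finset Polynomial

theorem isCoprime_of_forall_isPrime {R : Type*} [CommRing R] {u v : R}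
    (h : ∀ P : Ideal R, P.IsPrime → u ∈ P → v ∉ P) : IsCoprime u v := by
  rw [← Ideal.isCoprime_span_singleton_iff, Ideal.isCoprime_iff_sup_eq]
  by_contra hne
  obtain ⟨P, hP, hle⟩ := Ideal.exists_le_maximal _ hne
  exact h P hP.isPrime (hle (Ideal.mem_sup_left (Ideal.mem_span_singleton_self u)))
    (hle (Ideal.mem_sup_right (Ideal.mem_span_singleton_self v)))

theorem Polynomial.monic_C_mul_X_add_prod_X_sub_C {A ι : Type*} [CommRing A] [Nontrivial A]
    [Fintype ι] (hι : 1 < Fintype.card ι) (a : A) (s : ι → A) :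
    (C a * X + ∏ i, (X - C (s i))).Monic := by
  have hprod : (∏ i, (X - C (s i))).Monic := monic_prod_of_monic _ _ fun i _ => monic_X_sub_C _
  refine hprod.add_of_right ?_
  rw [degree_eq_natDegree hprod.ne_zero, natDegree_prod_of_monic _ _ fun i _ => monic_X_sub_C _]
  simp only [natDegree_X_sub_C, sum_const, card_univ, smul_eq_mul, mul_one]
  calc (C a * X).degree ≤ 1 := degree_C_mul_X_le a
    _ < (Fintype.card ι : WithBot ℕ) := by exact_mod_cast hι

theorem isIntegral_of_mul_add_prod_sub_eq_zero {A K ι : Type*} [CommRing A] [Nontrivial A]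
    [CommRing K] [Algebra A K] [Fintype ι] (hι : 1 < Fintype.card ι) (a : A) (s : ι → A) {x : K}
    (hx : x * algebraMap A K a + ∏ i, (x - algebraMap A K (s i)) = 0) : IsIntegral A x :=
  ⟨_, monic_C_mul_X_add_prod_X_sub_C hι a s, by
    rw [← hx]
    simp only [eval₂_add, eval₂_mul, eval₂_C, eval₂_X, eval₂_finsetProd, eval₂_sub, mul_comm]⟩

theorem exists_spanSingleton_eq_pow_of_associated_mul_pow {R K : Type*} [CommRing R]
    [IsDedekindDomain R] [CommRing K] [Algebra R K] [IsFractionRing R K] {u v c : R} {m : ℕ}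
    (huv : IsCoprime u v) (h : Associated (u * v) (c ^ m)) :
    ∃ I : FractionalIdeal (nonZeroDivisors R) K,
      FractionalIdeal.spanSingleton (nonZeroDivisors R) (algebraMap R K u) = I ^ m := by
  obtain ⟨A, hA⟩ := exists_eq_pow_of_mul_eq_pow_of_coprime
    ((Ideal.isCoprime_span_singleton_iff u v).mpr huv)
    (by rw [Ideal.span_singleton_mul_span_singleton, Ideal.span_singleton_eq_span_singleton.mpr h,
      Ideal.span_singleton_pow])
  exact ⟨A, by rw [← FractionalIdeal.coeIdeal_span_singleton, hA, FractionalIdeal.coeIdeal_pow]⟩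

section RootOfMulAddProd

variable {R ι : Type*} [CommRing R] [Fintype ι] [DecidableEq ι] {x a : R} {b : ι → R} {m : ℕ}

theorem sub_pow_mul_add_prod_erase_eq (hx : x * a ^ m + ∏ i, (x - b i ^ m) = 0) (j : ι) :
    (x - b j ^ m) * (a ^ m + ∏ i ∈ univ.erase j, (x - b i ^ m)) = -(a * b j) ^ m := by
  linear_combination mul_prod_erase univ (fun i => x - b i ^ m) (mem_univ j) + hx

theorem isCoprime_sub_pow_add_prod_erase (hm : 0 < m) (hx : x * a ^ m + ∏ i, (x - b i ^ m) = 0)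
    {j : ι} (h1 : ∀ i ≠ j, IsCoprime a (b j ^ m - b i ^ m))
    (h2 : IsCoprime (b j) (a ^ m + (-1) ^ (Fintype.card ι - 1) * ∏ i ∈ univ.erase j, b i ^ m)) :
    IsCoprime (x - b j ^ m) (a ^ m + ∏ i ∈ univ.erase j, (x - b i ^ m)) := by
  refine isCoprime_of_forall_isPrime fun P hP hα hβ => ?_
  have hab : a * b j ∈ P := by
    refine hP.mem_of_pow_mem m (neg_mem_iff.mp ?_)
    rw [← sub_pow_mul_add_prod_erase_eq hx j]
    exact P.mul_mem_right _ hα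
  rcases hP.mem_or_mem hab with ha | hb
  · have hprod : ∏ i ∈ univ.erase j, (x - b i ^ m) ∈ P := by
      simpa using P.sub_mem hβ (P.pow_mem_of_mem ha m hm)
    obtain ⟨i, hi, hαi⟩ := hP.prod_mem_iff.mp hprod
    have hdiff : b j ^ m - b i ^ m ∈ P := by simpa using P.sub_mem hαi hα
    exact hP.notMem_of_isCoprime_of_mem (h1 i (ne_of_mem_erase hi)) ha hdiff
  · have hxP : x ∈ P := by simpa using P.add_mem hα (P.pow_mem_of_mem hb m hm)
    refine hP.notMem_of_isCoprime_of_mem h2 hb ?_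
    rw [← Ideal.Quotient.eq_zero_iff_mem] at hβ hxP ⊢
    simpa [hxP, prod_neg, card_erase_of_mem] using hβ

end RootOfMulAddProd

open NumberField in
theorem stmt_12_general (n m : ℕ) (hn : 1 < n) (hm : 0 < m)
    (t₀ : ℤ) (t : Fin n → ℤ)
    (h1 : ∀ i j : Fin n, i ≠ j → IsCoprime t₀ (t i ^ m - t j ^ m))
    (h2 : ∀ i, IsCoprime (t i)
      (t₀ ^ m + (-1) ^ (n - 1) * ∏ j ∈ Finset.univ.erase i, t j ^ m))
    (K : Type*) [Field K] [NumberField K] (x : K)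
    (hx : x * (t₀ : K) ^ m + ∏ j, (x - (t j : K) ^ m) = 0) :
    ∀ j, ∃ I : FractionalIdeal (nonZeroDivisors (RingOfIntegers K)) K,
      FractionalIdeal.spanSingleton (nonZeroDivisors (RingOfIntegers K))
        (x - (t j : K) ^ m) = I ^ m := by
  intro j
  have hint : IsIntegral ℤ x := isIntegral_of_mul_add_prod_sub_eq_zero (by simpa using hn)
    (t₀ ^ m) (fun i => t i ^ m) (by simpa using hx)
  let y : 𝓞 K := ⟨x, hint⟩
  have hy : y * (t₀ : 𝓞 K) ^ m + ∏ i, (y - (t i : 𝓞 K) ^ m) = 0 :=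
    FaithfulSMul.algebraMap_injective (𝓞 K) K (by
      rw [map_zero, ← hx]
      simp only [map_add, map_mul, map_pow, map_intCast, map_prod, map_sub]
      rfl)
  have hcop : IsCoprime (y - (t j : 𝓞 K) ^ m)
      ((t₀ : 𝓞 K) ^ m + ∏ i ∈ univ.erase j, (y - (t i : 𝓞 K) ^ m)) :=
    isCoprime_sub_pow_add_prod_erase hm hy (fun i hij => by simpa using (h1 j i hij.symm).intCast)
      (by simpa using (h2 j).intCast (R := 𝓞 K))
  obtain ⟨I, hI⟩ := exists_spanSingleton_eq_pow_of_associated_mul_pow (K := K) hcop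
    (sub_pow_mul_add_prod_erase_eq hy j ▸ (Associated.refl _).neg_left)
  exact ⟨I, by rwa [map_sub, map_pow, map_intCast] at hI⟩

open NumberField in
/-- Let `n > 1` and `t₀, t₁, …, t_n` be nonzero integers satisfying the coprimality
conditions `gcd(t₀, t_i^m − t_j^m) = 1` for `i ≠ j` and
`gcd(t_i, t₀^m + (−1)^{n−1} ∏_{j≠i} t_j^m) = 1`.  If `x` is a root of
`X·t₀^m + ∏ (X − t_j^m)` and `K = ℚ(x)`, then each principal fractional ideal
`(x − t_j^m)` of `𝒪_K` is an `m`-th power of a fractional ideal. -/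
theorem stmt_12 (n m : ℕ) (hn : 1 < n) (hm : 0 < m)
    (t₀ : ℤ) (t : Fin n → ℤ) (ht₀ : t₀ ≠ 0) (ht : ∀ i, t i ≠ 0)
    (h1 : ∀ i j : Fin n, i ≠ j → IsCoprime t₀ (t i ^ m - t j ^ m))
    (h2 : ∀ i, IsCoprime (t i)
      (t₀ ^ m + (-1) ^ (n - 1) * ∏ j ∈ Finset.univ.erase i, t j ^ m))
    (K : Type*) [Field K] [NumberField K] (x : K)
    (hx : x * (t₀ : K) ^ m + ∏ j, (x - (t j : K) ^ m) = 0)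
    (hgen : IntermediateField.adjoin ℚ {x} = ⊤) :
    ∀ j, ∃ I : FractionalIdeal (nonZeroDivisors (RingOfIntegers K)) K,
      FractionalIdeal.spanSingleton (nonZeroDivisors (RingOfIntegers K))
        (x - (t j : K) ^ m) = I ^ m :=
  stmt_12_general n m hn hm t₀ t h1 h2 K x hx
end

section
/- Let n > 1, let a₁,…,a_r, b₁,…,b_r be integers such that the linear polynomials a_i x − b_i are pairwise non-proportional, let x₀ be an integer with gcd(a_i x₀ − b_i, a_j x₀ − b_j) = 1 for all i ≠ j, let f(x) = ∏_{i=1}^r (a_i x − b_i), let y₀ be a real n-th root of f(x₀), and let k = ℚ(y₀). Then for every j, the principal ideal (a_j x₀ − b_j) of 𝒪_k is the n-th power of an ideal of 𝒪_k. -/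
open NumberField in
/-- Let `n > 1`, let `a_i x − b_i` be pairwise non-proportional integer linear forms,
and `x₀` an integer with the values `a_i x₀ − b_i` pairwise coprime.  If `y₀` is a real
`n`-th root of `f(x₀) = ∏ (a_i x₀ − b_i)` and `K = ℚ(y₀)`, then each ideal
`(a_j x₀ − b_j)` of `𝒪_K` is the `n`-th power of an ideal. -/
theorem stmt_13 (n : ℕ) (hn : 1 < n) (r : ℕ) (a b : Fin r → ℤ)
    (hprop : ∀ i j, i ≠ j → a i * b j ≠ a j * b i)
    (x₀ : ℤ) (hcop : ∀ i j, i ≠ j → IsCoprime (a i * x₀ - b i) (a j * x₀ - b j))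
    (K : Type*) [Field K] [NumberField K] (ι : K →+* ℝ)
    (y₀ : K) (hy : y₀ ^ n = ((∏ i, (a i * x₀ - b i) : ℤ) : K))
    (hgen : IntermediateField.adjoin ℚ {y₀} = ⊤) :
    ∀ j, ∃ I : Ideal (RingOfIntegers K),
      Ideal.span {((a j * x₀ - b j : ℤ) : RingOfIntegers K)} = I ^ n := by
  intro j
  have hn0 : n ≠ 0 := by omega
  by_cases hjz : a j * x₀ - b j = 0
  · refine ⟨0, ?_⟩
    rw [hjz, zero_pow hn0]
    simp [Ideal.zero_eq_bot]
  by_cases hiz : ∃ i, a i * x₀ - b i = 0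
  · obtain ⟨i, hi⟩ := hiz
    have hij : i ≠ j := fun h => hjz (h ▸ hi)
    have hu : IsUnit (a j * x₀ - b j) := by
      have := hcop i j hij
      rw [hi] at this
      exact this.isUnit_of_dvd' (dvd_zero _) dvd_rfl
    refine ⟨⊤, ?_⟩
    rw [Ideal.top_pow, Ideal.span_singleton_eq_top]
    exact hu.map (Int.castRingHom (RingOfIntegers K))
  push_neg at hiz
  -- y₀ is integral
  set m : ℤ := ∏ i, (a i * x₀ - b i) with hm
  have hint : IsIntegral ℤ y₀ := by
    refine IsIntegral.of_pow (n := n) (Nat.pos_of_ne_zero hn0) ?_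
    rw [hy]
    exact isIntegral_algebraMap (R := ℤ) (x := m)
  let z : RingOfIntegers K := ⟨y₀, hint⟩
  have hz : z ^ n = ((m : ℤ) : RingOfIntegers K) := by
    apply RingOfIntegers.coe_injective
    push_cast
    exact hy
  have key : ∏ i, Ideal.span {((a i * x₀ - b i : ℤ) : RingOfIntegers K)}
      = (Ideal.span {z}) ^ n := by
    have hcast : ((m : ℤ) : RingOfIntegers K)
        = ∏ i, ((a i * x₀ - b i : ℤ) : RingOfIntegers K) := by
      rw [hm]; push_cast; rfl
    rw [Ideal.prod_span_singleton, Ideal.span_singleton_pow, hz, hcast]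
  have := Finset.exists_eq_pow_of_mul_eq_pow_of_coprime
    (s := Finset.univ) (f := fun i => Ideal.span {((a i * x₀ - b i : ℤ) : RingOfIntegers K)})
    (c := Ideal.span {z}) (n := n) ?_ key j (Finset.mem_univ j)
  · obtain ⟨I, hI⟩ := this
    exact ⟨I, hI⟩
  · intro i _ i' _ hii'
    rw [Ideal.isCoprime_span_singleton_iff]
    exact (hcop i i' hii').map (Int.castRingHom (RingOfIntegers K))
end

section
/- Let m > 1 and let a, b, c be distinct rational numbers. In the function field ℚ̄(X, Y) of the affine curve (Y − a)(Y − b) = X^m (Y − c), if (Y − a)^i (Y − c)^j = f^m for some f ∈ ℚ̄(X,Y) and integers 0 ≤ i, j < m, then i = j = 0. -/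
/-!
Put `K = ℚ̄(Y)`, so that `F = K(X)` with `X^m = g := (Y-a)(Y-b)/(Y-c)` and `[F : K] = m`.
Since `K` contains the `m`-th roots of unity, `F/K` is a cyclic Kummer extension whose
Galois group is generated by `σ : X ↦ ζX`. If `w := (Y-a)^i (Y-c)^j = f^m`, then `σ f = ζ^k f`
for some `k`, so `f X^t` is `σ`-invariant for `t ≡ -k (mod m)`, hence lies in `K`; that is,
`w g^t = u^m` in `K`. Comparing orders of vanishing modulo `m` at `b`, `a` and `c` gives
successively `t ≡ 0`, `i ≡ 0` and `j ≡ 0`.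
-/

open Polynomial Module IntermediateField

theorem Polynomial.rootMultiplicity_pow {R : Type*} [CommRing R] [IsDomain R] (p : R[X])
    (x : R) (n : ℕ) : rootMultiplicity x (p ^ n) = n * rootMultiplicity x p := by
  classical
  rw [← count_roots, roots_pow, Multiset.count_nsmul, count_roots]

theorem IsPrimitiveRoot.exists_eq_pow_mul_of_pow_eq_pow {R : Type*} [CommRing R] [IsDomain R]
    {m : ℕ} [NeZero m] {ζ : R} (hζ : IsPrimitiveRoot ζ m) {y z : R} (h : y ^ m = z ^ m) :
    ∃ k, y = ζ ^ k * z := by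
  have hy : y ∈ nthRoots m (z ^ m) := (mem_nthRoots (NeZero.pos m)).mpr h
  rw [hζ.nthRoots_eq rfl] at hy
  obtain ⟨k, -, hk⟩ := Multiset.mem_map.mp hy
  exact ⟨k, hk.symm⟩

theorem exists_lt_mul_pow_eq_pow_of_algebraMap_eq_pow {K F : Type*} [Field K] [Field F]
    [Algebra K F] {m : ℕ} [NeZero m] {ζ : K} (hζ : IsPrimitiveRoot ζ m)
    (hdeg : finrank K F = m) {g : K} {x : F} (hx : x ^ m = algebraMap K F g) (hgen : K⟮x⟯ = ⊤)
    {w : K} {f : F} (hf : algebraMap K F w = f ^ m) :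
    ∃ t < m, ∃ u : K, w * g ^ t = u ^ m := by
  subst hdeg
  have : FiniteDimensional K F := Module.finite_of_finrank_pos (NeZero.pos _)
  have hK : (primitiveRoots (finrank K F) K).Nonempty :=
    ⟨ζ, (mem_primitiveRoots (NeZero.pos _)).mpr hζ⟩
  have hirr := irreducible_X_pow_sub_C_of_root_adjoin_eq_top hx hgen
  have := isSplittingField_X_pow_sub_C_of_root_adjoin_eq_top hK hx hgen
  have := isGalois_of_isSplittingField_X_pow_sub_C hK hirr F
  let e := autEquivZmod hirr F hζ
  let σ := e.symm (Multiplicative.ofAdd 1)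
  have hσx : σ x = ζ • x := by
    simpa using autEquivZmod_symm_apply_natCast hirr F hx hζ 1
  obtain ⟨k, hσf⟩ : ∃ k, σ f = ζ ^ k • f := by
    simp only [Algebra.smul_def, map_pow]
    refine (hζ.map_of_injective (algebraMap K F).injective).exists_eq_pow_mul_of_pow_eq_pow ?_
    rw [← map_pow, ← hf, AlgEquiv.commutes]
  obtain ⟨t, ht, hkt⟩ : ∃ t < finrank K F, ζ ^ (k + t) = 1 := by
    refine ⟨((-k : ℤ) : ZMod (finrank K F)).val, ZMod.val_lt _, (hζ.pow_eq_one_iff_dvd _).mpr ?_⟩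
    rw [← ZMod.natCast_eq_zero_iff]
    push_cast [ZMod.natCast_val, ZMod.cast_id]
    ring
  have hσE : σ (f * x ^ t) = f * x ^ t := by
    rw [map_mul, map_pow, hσf, hσx, _root_.smul_pow, smul_mul_smul_comm, ← pow_add, hkt,
      one_smul]
  obtain ⟨u, hu⟩ : f * x ^ t ∈ Set.range (algebraMap K F) := by
    refine (IsGalois.mem_range_algebraMap_iff_fixed _).mpr fun τ => ?_
    obtain ⟨n, rfl⟩ : ∃ n : ℕ, σ ^ n = τ :=
      ⟨(Multiplicative.toAdd (e τ)).val, e.injective (by simp [σ, map_pow, ← ofAdd_nsmul])⟩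
    rw [AlgEquiv.coe_pow, Function.iterate_fixed hσE]
  refine ⟨t, ht, u, (algebraMap K F).injective ?_⟩
  rw [map_mul, map_pow, map_pow, hu, hf, ← hx]
  ring

section RatFunc

variable {K : Type*} [Field K]

theorem rootMultiplicity_modEq_of_algebraMap_eq_pow_mul {p q : K[X]} (hp : p ≠ 0) (hq : q ≠ 0)
    {u : RatFunc K} {m : ℕ}
    (h : algebraMap K[X] (RatFunc K) p = u ^ m * algebraMap K[X] (RatFunc K) q) (r : K) :
    rootMultiplicity r p ≡ rootMultiplicity r q [MOD m] := by
  obtain rfl | hm := eq_or_ne m 0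
  · rw [pow_zero, one_mul] at h
    rw [RatFunc.algebraMap_injective K h]
  have hdenom := u.denom_ne_zero
  have hnum : u.num ≠ 0 := RatFunc.num_ne_zero <| by
    rintro rfl
    simp [zero_pow hm, hp] at h
  have hu : u * algebraMap K[X] (RatFunc K) u.denom = algebraMap K[X] (RatFunc K) u.num :=
    (eq_div_iff (RatFunc.algebraMap_ne_zero hdenom)).mp (RatFunc.num_div_denom u).symm
  have hpoly : p * u.denom ^ m = u.num ^ m * q := by
    apply RatFunc.algebraMap_injective K
    rw [map_mul, map_pow, h, map_mul, map_pow, ← hu]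
    ring
  have hmult := congrArg (rootMultiplicity r) hpoly
  rw [rootMultiplicity_mul (mul_ne_zero hp (pow_ne_zero _ hdenom)),
    rootMultiplicity_mul (mul_ne_zero (pow_ne_zero _ hnum) hq), rootMultiplicity_pow,
    rootMultiplicity_pow] at hmult
  calc rootMultiplicity r p % m = (rootMultiplicity r p + m * rootMultiplicity r u.denom) % m :=
        (Nat.add_mul_mod_self_left _ _ _).symm
    _ = (rootMultiplicity r q + m * rootMultiplicity r u.num) % m := by rw [hmult, add_comm]
    _ = rootMultiplicity r q % m := Nat.add_mul_mod_self_left _ _ _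

theorem RatFunc.X_sub_C_eq_algebraMap (r : K) :
    RatFunc.X - RatFunc.C r = algebraMap K[X] (RatFunc K) (Polynomial.X - Polynomial.C r) := by
  rw [map_sub, RatFunc.algebraMap_X, RatFunc.algebraMap_C]

theorem eq_zero_of_X_sub_C_pow_mul_eq_pow {α β γ : K} (hαβ : α ≠ β) (hαγ : α ≠ γ)
    (hβγ : β ≠ γ) {m i j t : ℕ} (hi : i < m) (hj : j < m) (ht : t < m) {u : RatFunc K}
    (h : (RatFunc.X - RatFunc.C α) ^ i * (RatFunc.X - RatFunc.C γ) ^ j *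
      ((RatFunc.X - RatFunc.C α) * (RatFunc.X - RatFunc.C β) / (RatFunc.X - RatFunc.C γ)) ^ t
      = u ^ m) : i = 0 ∧ j = 0 := by
  classical
  have hcleared : algebraMap K[X] (RatFunc K)
      ((X - C α) ^ i * (X - C γ) ^ j * ((X - C α) * (X - C β)) ^ t) =
      u ^ m * algebraMap K[X] (RatFunc K) ((X - C γ) ^ t) := by
    simp only [RatFunc.X_sub_C_eq_algebraMap] at h
    rw [← h, div_pow, ← mul_div_assoc, map_pow _ _ t, div_mul_cancel₀ _ (pow_ne_zero _ _)]
    · simp only [map_mul, map_pow]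
    · exact RatFunc.algebraMap_ne_zero (X_sub_C_ne_zero γ)
  have hmod := rootMultiplicity_modEq_of_algebraMap_eq_pow_mul (by simp [X_sub_C_ne_zero])
    (by simp [X_sub_C_ne_zero]) hcleared
  have hα := hmod α
  have hβ := hmod β
  have hγ := hmod γ
  simp only [ne_eq, mul_eq_zero, pow_eq_zero_iff', X_sub_C_ne_zero, false_and, or_self,
    not_false_eq_true, rootMultiplicity_mul, rootMultiplicity_pow, rootMultiplicity_X_sub_C,
    ↓reduceIte, hαβ, hαγ, hβγ, hαβ.symm, hαγ.symm, hβγ.symm, mul_one, mul_zero, add_zero,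
    zero_add] at hα hβ hγ
  obtain rfl : t = 0 := hβ.eq_of_lt_of_lt ht (Nat.zero_lt_of_lt ht)
  exact ⟨hα.eq_of_lt_of_lt hi (Nat.zero_lt_of_lt hi), hγ.eq_of_lt_of_lt hj (Nat.zero_lt_of_lt hj)⟩

end RatFunc

/-- Let `m > 1` and `a, b, c ∈ ℚ` be distinct.  Model the function field
`F = ℚ̄(X, Y)` of the affine curve `(Y−a)(Y−b) = X^m(Y−c)` as a degree-`m` extension of
`ℚ̄(Y)` generated by `X` with `X^m = (Y−a)(Y−b)/(Y−c)`.  If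
`(Y−a)^i (Y−c)^j = f^m` with `f ∈ F` and `0 ≤ i, j < m`, then `i = j = 0`. -/
theorem stmt_15 (m : ℕ) (hm : 1 < m) (a b c : ℚ)
    (hab : a ≠ b) (hac : a ≠ c) (hbc : b ≠ c)
    (F : Type*) [Field F] [Algebra (RatFunc (AlgebraicClosure ℚ)) F]
    (X : F)
    (hXm : X ^ m = algebraMap (RatFunc (AlgebraicClosure ℚ)) F
      (((RatFunc.X - RatFunc.C (algebraMap ℚ (AlgebraicClosure ℚ) a)) *
        (RatFunc.X - RatFunc.C (algebraMap ℚ (AlgebraicClosure ℚ) b))) /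
        (RatFunc.X - RatFunc.C (algebraMap ℚ (AlgebraicClosure ℚ) c))))
    (hgenF : Algebra.adjoin (RatFunc (AlgebraicClosure ℚ)) {X} = ⊤)
    (hdeg : Module.finrank (RatFunc (AlgebraicClosure ℚ)) F = m)
    (i j : ℕ) (hi : i < m) (hj : j < m) (f : F)
    (hf : (algebraMap (RatFunc (AlgebraicClosure ℚ)) F
        (RatFunc.X - RatFunc.C (algebraMap ℚ (AlgebraicClosure ℚ) a))) ^ i *
      (algebraMap (RatFunc (AlgebraicClosure ℚ)) F
        (RatFunc.X - RatFunc.C (algebraMap ℚ (AlgebraicClosure ℚ) c))) ^ j = f ^ m) :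
    i = 0 ∧ j = 0 := by
  have : NeZero m := ⟨by omega⟩
  obtain ⟨ζ, hζ⟩ := HasEnoughRootsOfUnity.exists_primitiveRoot (AlgebraicClosure ℚ) m
  obtain ⟨t, ht, u, hu⟩ := exists_lt_mul_pow_eq_pow_of_algebraMap_eq_pow
    (hζ.map_of_injective RatFunc.C.injective) hdeg hXm (adjoin_eq_top_of_algebra _ _ hgenF)
    (by rwa [← map_pow, ← map_pow, ← map_mul] at hf)
  have hinj := (algebraMap ℚ (AlgebraicClosure ℚ)).injective
  exact eq_zero_of_X_sub_C_pow_mul_eq_pow (hinj.ne hab) (hinj.ne hac) (hinj.ne hbc) hi hj ht hu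
end

section
/- For y sufficiently large, the real polynomial g_y(x) = x(ay+b)^m + ∏_{i=1}^n (x − c_i^m), where a, b, c₁ < c₂ < ··· < c_n are fixed positive integers and m > 1, has exactly one real root if n is odd and exactly two real roots if n is even, and its discriminant (in x) is O(y^{mn}). -/
/-!
Write `g = X * K + P` with `P = ∏ (X - c_i ^ m)` monic of degree `n` and `K = (a y + b) ^ m → ∞`.

At a common complex root `z` of `g` and `g'`, the parameter cancels from `z g'(z) - g(z)`, so `z`
is a root of `X P' - P`, and `K = -P'(z)` is bounded: for large `K` the polynomial is separable.
If `n` is odd, `g' = K + P'` is positive on `ℝ` because `P'` has even degree and is bounded below.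
If `n` is even, `P'` is strictly increasing far to the left and bounded below on the rest of the
line, so `g'` has at most one real zero. By Rolle, `g` has at most one real root more than `g'`;
conversely `g(-1) < 0`, while `g → +∞` at `+∞`, and also at `-∞` when `n` is even.

A complex root satisfies `|z| ^ n ≤ K |z| + O(|z| ^ (n - 1))`, hence `|z| ^ (n - 1) ≤ 2 K`, so each
of the `n (n - 1)` differences of roots has `(n - 1)`-th power `O(K)` and the product is
`O(K ^ n) = O(y ^ (m n))`.
-/

open Polynomial Filter Finset

namespace Polynomial

lemma norm_aeval_le_of_natDegree_le {A : Type*} [NormedRing A] [NormOneClass A]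
    [NormedAlgebra ℝ A] (p : ℝ[X]) {d : ℕ} (hd : p.natDegree ≤ d) (z : A) :
    ‖aeval z p‖ ≤ (∑ i ∈ range (d + 1), ‖p.coeff i‖) * max 1 ‖z‖ ^ d := by
  rw [aeval_eq_sum_range' (Nat.lt_succ_of_le hd), Finset.sum_mul]
  refine (norm_sum_le _ _).trans (Finset.sum_le_sum fun i hi => ?_)
  rw [norm_smul]
  gcongr
  calc ‖z ^ i‖ ≤ ‖z‖ ^ i := norm_pow_le _ _
    _ ≤ max 1 ‖z‖ ^ i := by gcongr; exact le_max_right _ _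
    _ ≤ max 1 ‖z‖ ^ d := pow_le_pow_right₀ (le_max_left _ _) (by simp at hi; omega)

variable {p : ℝ[X]}

lemma eventually_atTop_eval_pos (hlc : 0 < p.leadingCoeff) : ∀ᶠ x in atTop, 0 < p.eval x := by
  filter_upwards [(eventually_all_finset p.roots.toFinset).2 fun y _ => eventually_gt_atTop y]
    with x hx
  refine zero_lt_eval_of_roots_lt_of_leadingCoeff_nonneg (fun y hy => hx y ?_) hlc.le
  exact Multiset.mem_toFinset.2 ((mem_roots (leadingCoeff_ne_zero.1 hlc.ne')).2 hy)

lemma eventually_atBot_eval_pos (hp : Even p.natDegree) (hlc : 0 < p.leadingCoeff) :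
    ∀ᶠ x in atBot, 0 < p.eval x := by
  filter_upwards [(eventually_all_finset p.roots.toFinset).2 fun y _ => eventually_lt_atBot y]
    with x hx
  have := zero_lt_negOnePow_mul_eval_of_lt_roots_of_leadingCoeff_nonneg (fun y hy => hx y
    (Multiset.mem_toFinset.2 ((mem_roots (leadingCoeff_ne_zero.1 hlc.ne')).2 hy))) hlc.le
  simpa [hp.neg_one_pow] using this

lemma exists_isRoot_gt (hlc : 0 < p.leadingCoeff) {x : ℝ} (hx : p.eval x < 0) :
    ∃ y, x < y ∧ p.IsRoot y := by
  obtain ⟨z, hz, hxz⟩ := ((eventually_atTop_eval_pos hlc).and (eventually_gt_atTop x)).exists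
  obtain ⟨y, hy, hy0⟩ := intermediate_value_Ioo hxz.le p.continuous.continuousOn ⟨hx, hz⟩
  exact ⟨y, hy.1, hy0⟩

lemma exists_isRoot_lt (hp : Even p.natDegree) (hlc : 0 < p.leadingCoeff) {x : ℝ}
    (hx : p.eval x < 0) : ∃ y, y < x ∧ p.IsRoot y := by
  obtain ⟨z, hz, hzx⟩ := ((eventually_atBot_eval_pos hp hlc).and (eventually_lt_atBot x)).exists
  obtain ⟨y, hy, hy0⟩ := intermediate_value_Ioo' hzx.le p.continuous.continuousOn ⟨hx, hz⟩
  exact ⟨y, hy.2, hy0⟩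

lemma exists_forall_ge_le_eval (hlc : 0 < p.leadingCoeff) (R : ℝ) :
    ∃ M, ∀ x, R ≤ x → M ≤ p.eval x := by
  obtain ⟨R', hR'⟩ := (eventually_atTop_eval_pos hlc).exists_forall_of_atTop
  obtain ⟨M, hM⟩ := (isCompact_Icc (a := R) (b := R')).bddBelow_image p.continuous.continuousOn
  refine ⟨min M 0, fun x hx => ?_⟩
  rcases le_or_gt x R' with h | h
  · exact (min_le_left _ _).trans (hM ⟨x, ⟨hx, h⟩, rfl⟩)
  · exact (min_le_right _ _).trans (hR' x h.le).le

lemma exists_forall_le_eval (hp : Even p.natDegree) (hlc : 0 < p.leadingCoeff) :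
    ∃ M, ∀ x, M ≤ p.eval x := by
  obtain ⟨R, hR⟩ := (eventually_atBot_eval_pos hp hlc).exists_forall_of_atBot
  obtain ⟨M, hM⟩ := exists_forall_ge_le_eval hlc R
  refine ⟨min M 0, fun x => ?_⟩
  rcases le_total x R with h | h
  · exact (min_le_right _ _).trans (hR x h).le
  · exact (min_le_left _ _).trans (hM x h)

lemma eventually_forall_eval_C_add_pos (hp : Even p.natDegree) (hlc : 0 < p.leadingCoeff) :
    ∀ᶠ K in atTop, ∀ x, 0 < (C K + p).eval x := by
  obtain ⟨M, hM⟩ := exists_forall_le_eval hp hlc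
  filter_upwards [eventually_gt_atTop (-M)] with K hK x
  rw [eval_add, eval_C]
  linarith [hM x]

lemma eventually_card_roots_toFinset_C_add_le_one (hp : Odd p.natDegree)
    (hlc : 0 < p.leadingCoeff) : ∀ᶠ K in atTop, (C K + p).roots.toFinset.card ≤ 1 := by
  have hp' : Even (derivative p).natDegree := by
    rw [natDegree_derivative]
    exact Nat.Odd.sub_odd hp odd_one
  have hlc' : 0 < (derivative p).leadingCoeff := by
    rw [leadingCoeff_derivative]
    exact mul_pos hlc (by exact_mod_cast hp.pos)
  obtain ⟨R, hR⟩ := (eventually_atBot_eval_pos hp' hlc').exists_forall_of_atBot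
  have hmono : StrictMonoOn p.eval (Set.Iic R) :=
    strictMonoOn_of_deriv_pos (convex_Iic R) p.continuous.continuousOn fun x hx => by
      rw [interior_Iic] at hx
      rw [Polynomial.deriv]
      exact hR x hx.le
  obtain ⟨M, hM⟩ := exists_forall_ge_le_eval hlc R
  filter_upwards [eventually_gt_atTop (-M)] with K hK
  have hroot : ∀ x ∈ (C K + p).roots.toFinset, x ≤ R ∧ p.eval x = -K := by
    intro x hx
    have : K + p.eval x = 0 := by simpa using (mem_roots'.1 (Multiset.mem_toFinset.1 hx)).2
    refine ⟨le_of_not_gt fun h => ?_, by linarith⟩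
    linarith [hM x h.le]
  refine Finset.card_le_one.2 fun x hx y hy => ?_
  exact hmono.injOn (hroot x hx).1 (hroot y hy).1 ((hroot x hx).2.trans (hroot y hy).2.symm)

section PerturbedByLinearTerm

variable {P : ℝ[X]}

lemma degree_X_mul_C_lt (hn : 2 ≤ P.natDegree) (K : ℝ) : (X * C K).degree < P.degree := by
  calc (X * C K).degree ≤ 1 := by compute_degree
    _ < P.degree := by
      rw [degree_eq_natDegree (ne_zero_of_natDegree_gt hn)]
      exact_mod_cast hn

lemma Monic.X_mul_C_add (hP : P.Monic) (hn : 2 ≤ P.natDegree) (K : ℝ) : (X * C K + P).Monic :=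
  hP.add_of_right (degree_X_mul_C_lt hn K)

lemma natDegree_X_mul_C_add (hn : 2 ≤ P.natDegree) (K : ℝ) :
    (X * C K + P).natDegree = P.natDegree :=
  natDegree_add_eq_right_of_degree_lt (degree_X_mul_C_lt hn K)

lemma derivative_X_mul_C_add (K : ℝ) : derivative (X * C K + P) = C K + derivative P := by
  simp

lemma X_mul_derivative_sub_ne_zero (hP : P.Monic) (hn : 2 ≤ P.natDegree) :
    X * derivative P - P ≠ 0 := by
  intro h
  obtain ⟨k, hk⟩ : ∃ k, P.natDegree = k + 2 := ⟨P.natDegree - 2, by omega⟩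
  have := congrArg (coeff · (k + 2)) h
  simp only [coeff_sub, coeff_X_mul, coeff_derivative, coeff_zero] at this
  rw [← hk, hP.coeff_natDegree] at this
  push_cast at this
  linarith

lemma eventually_separable_X_mul_C_add (hP : P.Monic) (hn : 2 ≤ P.natDegree) :
    ∀ᶠ K in atTop, (X * C K + P).Separable := by
  filter_upwards [(eventually_all_finset ((X * derivative P - P).aroots ℂ).toFinset).2
    fun z _ => eventually_gt_atTop ‖aeval z (derivative P)‖] with K hK
  rw [Separable, isCoprime_iff_aeval_ne_zero_of_isAlgClosed ℝ ℂ]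
  intro z
  by_contra! h
  obtain ⟨hg, hg'⟩ := h
  rw [derivative_X_mul_C_add] at hg'
  simp only [map_add, map_mul, aeval_X, aeval_C, Complex.coe_algebraMap] at hg hg'
  have hz : z ∈ ((X * derivative P - P).aroots ℂ).toFinset := by
    rw [Multiset.mem_toFinset, mem_aroots]
    refine ⟨X_mul_derivative_sub_ne_zero hP hn, ?_⟩
    simp only [map_sub, map_mul, aeval_X]
    linear_combination z * hg' - hg
  have hK' := hK z hz
  rw [show aeval z (derivative P) = -((K : ℝ) : ℂ) by
      simpa [eq_neg_iff_add_eq_zero, add_comm] using hg',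
    norm_neg, Complex.norm_real, Real.norm_eq_abs] at hK'
  linarith [le_abs_self K]

lemma eventually_card_roots_toFinset_derivative_X_mul_C_add_le (hP : P.Monic)
    (hn : 2 ≤ P.natDegree) : ∀ᶠ K in atTop,
      (derivative (X * C K + P)).roots.toFinset.card ≤ if Odd P.natDegree then 0 else 1 := by
  have hlc : 0 < (derivative P).leadingCoeff := by
    rw [leadingCoeff_derivative, hP.leadingCoeff, one_mul]
    exact_mod_cast (by omega : 0 < P.natDegree)
  simp only [derivative_X_mul_C_add]
  split_ifs with hodd
  · have hdeg : Even (derivative P).natDegree := by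
      rw [natDegree_derivative]
      exact Nat.Odd.sub_odd hodd odd_one
    filter_upwards [eventually_forall_eval_C_add_pos hdeg hlc] with K hK
    rw [Nat.le_zero, Finset.card_eq_zero, Multiset.toFinset_eq_empty]
    exact Multiset.eq_zero_of_forall_notMem fun x hx => (hK x).ne' (mem_roots'.1 hx).2
  · have hdeg : Odd (derivative P).natDegree := by
      rw [natDegree_derivative]
      exact Nat.Even.sub_odd (by omega) (Nat.not_odd_iff_even.1 hodd) odd_one
    exact eventually_card_roots_toFinset_C_add_le_one hdeg hlc

lemma eventually_le_card_roots_toFinset_X_mul_C_add (hP : P.Monic) (hn : 2 ≤ P.natDegree) :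
    ∀ᶠ K in atTop, (if Odd P.natDegree then 1 else 2) ≤ (X * C K + P).roots.toFinset.card := by
  filter_upwards [eventually_gt_atTop (P.eval (-1))] with K hK
  set g := X * C K + P
  have hg : g.Monic := hP.X_mul_C_add hn K
  have hglc : 0 < g.leadingCoeff := by rw [hg.leadingCoeff]; exact one_pos
  have hg1 : g.eval (-1) < 0 := by
    simp only [g, eval_add, eval_mul, eval_X, eval_C]
    linarith
  have hmem : ∀ {y}, g.IsRoot y → y ∈ g.roots.toFinset := fun hy =>
    Multiset.mem_toFinset.2 ((mem_roots hg.ne_zero).2 hy)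
  obtain ⟨y₂, hy₂, hgy₂⟩ := exists_isRoot_gt hglc hg1
  split_ifs with hodd
  · exact Finset.card_pos.2 ⟨y₂, hmem hgy₂⟩
  · have heven : Even g.natDegree := by
      rw [natDegree_X_mul_C_add hn]
      exact Nat.not_odd_iff_even.1 hodd
    obtain ⟨y₁, hy₁, hgy₁⟩ := exists_isRoot_lt heven hglc hg1
    exact Finset.one_lt_card.2 ⟨y₁, hmem hgy₁, y₂, hmem hgy₂, by linarith⟩

lemma eventually_card_roots_X_mul_C_add (hP : P.Monic) (hn : 2 ≤ P.natDegree) :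
    ∀ᶠ K in atTop, Multiset.card (X * C K + P).roots = if Odd P.natDegree then 1 else 2 := by
  filter_upwards [eventually_separable_X_mul_C_add hP hn,
    eventually_card_roots_toFinset_derivative_X_mul_C_add_le hP hn,
    eventually_le_card_roots_toFinset_X_mul_C_add hP hn] with K hsep hle hge
  rw [← Multiset.toFinset_card_of_nodup (nodup_roots hsep)]
  have := card_roots_toFinset_le_derivative (X * C K + P)
  split_ifs at * <;> omega

lemma eventually_norm_pow_le_of_aeval_X_mul_C_add_eq_zero (hP : P.Monic)
    (hn : 0 < P.natDegree) : ∀ᶠ K in atTop,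
      ∀ z : ℂ, aeval z (X * C K + P) = 0 → ‖z‖ ^ (P.natDegree - 1) ≤ 2 * K := by
  set n := P.natDegree
  set S := ∑ i ∈ range (n - 1 + 1), ‖P.eraseLead.coeff i‖
  set R := max 1 (2 * S)
  have hsplit : ∀ z : ℂ, aeval z P = aeval z P.eraseLead + z ^ n := fun z => by
    conv_lhs => rw [← P.eraseLead_add_C_mul_X_pow]
    simp [hP.leadingCoeff, n]
  filter_upwards [eventually_ge_atTop (R ^ (n - 1) / 2)] with K hK z hz
  by_cases hzR : ‖z‖ ≤ R
  · calc ‖z‖ ^ (n - 1) ≤ R ^ (n - 1) := by gcongr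
      _ ≤ 2 * K := by linarith
  rw [not_le] at hzR
  have h1 : 1 ≤ ‖z‖ := (le_max_left _ _).trans hzR.le
  have h2S : 2 * S ≤ ‖z‖ := (le_max_right _ _).trans hzR.le
  have hKpos : 0 ≤ K := le_trans (by positivity) hK
  have hE := norm_aeval_le_of_natDegree_le P.eraseLead P.eraseLead_natDegree_le z
  rw [max_eq_right h1] at hE
  have hzn : ‖z‖ ^ (n - 1) * ‖z‖ ≤ K * ‖z‖ + S * ‖z‖ ^ (n - 1) := by
    have hroot : z ^ n = -(z * K) - aeval z P.eraseLead := by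
      simp only [map_add, map_mul, aeval_X, aeval_C, Complex.coe_algebraMap, hsplit] at hz
      linear_combination hz
    calc ‖z‖ ^ (n - 1) * ‖z‖ = ‖z ^ n‖ := by rw [norm_pow, pow_sub_one_mul hn.ne']
      _ ≤ ‖z * K‖ + ‖aeval z P.eraseLead‖ := by
        rw [hroot]
        exact (norm_sub_le _ _).trans_eq (by rw [norm_neg])
      _ ≤ K * ‖z‖ + S * ‖z‖ ^ (n - 1) := by
        rw [norm_mul, Complex.norm_real, Real.norm_eq_abs, abs_of_nonneg hKpos, mul_comm]
        exact add_le_add_right hE _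
  have ht : 0 ≤ ‖z‖ ^ (n - 1) := by positivity
  have : ‖z‖ ^ (n - 1) * ‖z‖ ≤ 2 * K * ‖z‖ := by nlinarith [mul_le_mul_of_nonneg_left h2S ht]
  exact le_of_mul_le_mul_right this (by linarith)

end PerturbedByLinearTerm

end Polynomial

lemma prod_offDiag_norm_sub_le {ι E : Type*} [Fintype ι] [DecidableEq ι]
    [SeminormedAddCommGroup E] (hι : 1 < Fintype.card ι) (r : ι → E) {B : ℝ}
    (hr : ∀ i, ‖r i‖ ^ (Fintype.card ι - 1) ≤ B) :
    ∏ q ∈ univ.offDiag, ‖r q.1 - r q.2‖ ≤ (2 ^ (Fintype.card ι - 1) * B) ^ Fintype.card ι := by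
  set k := Fintype.card ι - 1
  have hterm : ∀ q ∈ (univ : Finset ι).offDiag, ‖r q.1 - r q.2‖ ^ k ≤ 2 ^ k * B := by
    intro q _
    have hmax : max ‖r q.1‖ ‖r q.2‖ ^ k ≤ B := by
      rcases max_choice ‖r q.1‖ ‖r q.2‖ with h | h <;> rw [h] <;> exact hr _
    calc ‖r q.1 - r q.2‖ ^ k ≤ (2 * max ‖r q.1‖ ‖r q.2‖) ^ k := by
          gcongr
          linarith [norm_sub_le (r q.1) (r q.2), le_max_left ‖r q.1‖ ‖r q.2‖,
            le_max_right ‖r q.1‖ ‖r q.2‖]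
      _ ≤ 2 ^ k * B := by rw [mul_pow]; gcongr
  have hB : 0 ≤ B := by
    obtain ⟨i⟩ : Nonempty ι := Fintype.card_pos_iff.1 (by omega)
    exact (pow_nonneg (norm_nonneg _) _).trans (hr i)
  have hcard : (univ : Finset ι).offDiag.card = Fintype.card ι * k := by
    rw [offDiag_card, card_univ, Nat.mul_sub_one]
  refine le_of_pow_le_pow_left₀ (by omega : k ≠ 0) (by positivity) ?_
  calc (∏ q ∈ univ.offDiag, ‖r q.1 - r q.2‖) ^ k = ∏ q ∈ univ.offDiag, ‖r q.1 - r q.2‖ ^ k :=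
        (prod_pow _ _ _).symm
    _ ≤ ∏ _q ∈ (univ : Finset ι).offDiag, 2 ^ k * B :=
        prod_le_prod (fun _ _ => by positivity) hterm
    _ = ((2 ^ k * B) ^ Fintype.card ι) ^ k := by rw [prod_const, hcard, pow_mul]

lemma Multiset.exists_fin_map_univ_eq {α : Type*} (s : Multiset α) {n : ℕ}
    (hs : Multiset.card s = n) : ∃ r : Fin n → α, s = Multiset.map r univ.val := by
  obtain rfl : s.toList.length = n := by rw [Multiset.length_toList, hs]
  exact ⟨s.toList.get, by rw [Fin.univ_val_map, List.ofFn_get, Multiset.coe_toList]⟩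

lemma tendsto_intCast_mul_add_pow_atTop {a : ℤ} (ha : 0 < a) (b : ℤ) {m : ℕ} (hm : m ≠ 0) :
    Tendsto (fun y : ℕ => ((a * y + b : ℤ) : ℝ) ^ m) atTop atTop := by
  refine (tendsto_pow_atTop hm).comp ?_
  push_cast
  exact tendsto_atTop_add_const_right _ _
    (tendsto_natCast_atTop_atTop.const_mul_atTop (by exact_mod_cast ha))

lemma mul_add_pow_le {a y : ℝ} (ha : 0 ≤ a) (hy : 1 ≤ y) (b : ℝ) (m : ℕ) :
    (a * y + b) ^ m ≤ (a + |b|) ^ m * y ^ m := by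
  rw [← mul_pow]
  refine (le_abs_self _).trans ?_
  rw [abs_pow]
  gcongr
  calc |a * y + b| ≤ a * y + |b| := by
        refine (abs_add_le _ _).trans ?_
        rw [abs_of_nonneg (by positivity)]
    _ ≤ (a + |b|) * y := by nlinarith [abs_nonneg b]

theorem stmt_18_general (m n : ℕ) (hm : 1 < m) (hn : 1 < n)
    (a b : ℤ) (ha : 0 < a)
    (c : Fin n → ℤ) :
    ∃ (C : ℝ) (y₀ : ℕ), ∀ y : ℕ, y₀ ≤ y →
      let g : Polynomial ℝ :=
        Polynomial.X * Polynomial.C (((a * y + b : ℤ) : ℝ) ^ m) +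
          ∏ i, (Polynomial.X - Polynomial.C ((c i : ℝ) ^ m))
      Squarefree g ∧
      (Multiset.card g.roots = if Odd n then 1 else 2) ∧
      ∃ r : Fin n → ℂ,
        (g.map (algebraMap ℝ ℂ)).roots = Multiset.map r Finset.univ.val ∧
        ‖(g.leadingCoeff : ℂ) ^ (2 * n - 2) *
            ∏ p ∈ (Finset.univ : Finset (Fin n)).offDiag, (r p.1 - r p.2)‖
          ≤ C * (y : ℝ) ^ (m * n) := by
  set P : ℝ[X] := ∏ i, (X - C ((c i : ℝ) ^ m))
  have hP : P.Monic := monic_prod_of_monic _ _ fun i _ => monic_X_sub_C _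
  have hPdeg : P.natDegree = n := by
    rw [natDegree_finsetProd_X_sub_C_eq_card, card_univ, Fintype.card_fin]
  have hK := tendsto_intCast_mul_add_pow_atTop ha b (by omega : m ≠ 0)
  obtain ⟨y₀, hy₀⟩ := (hK.eventually <| (eventually_separable_X_mul_C_add hP (by omega)).and <|
    (eventually_card_roots_X_mul_C_add hP (by omega)).and <|
      eventually_norm_pow_le_of_aeval_X_mul_C_add_eq_zero hP (by omega)).exists_forall_of_atTop
  refine ⟨(2 ^ (n - 1) * 2 * ((a : ℝ) + |(b : ℝ)|) ^ m) ^ n, max y₀ 1, fun y hy => ?_⟩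
  intro g
  obtain ⟨hsep, hcard, hroots⟩ := hy₀ y (le_of_max_le_left hy)
  have hg : g.Monic := hP.X_mul_C_add (by omega) _
  refine ⟨hsep.squarefree, by rwa [hPdeg] at hcard, ?_⟩
  obtain ⟨r, hr⟩ := Multiset.exists_fin_map_univ_eq (g.aroots ℂ) (n := n) (by
    rw [IsAlgClosed.card_roots_map_eq_natDegree_of_injective _ (algebraMap ℝ ℂ).injective,
      natDegree_X_mul_C_add (by omega), hPdeg])
  refine ⟨r, hr, ?_⟩
  have hKy : ((a * y + b : ℤ) : ℝ) ^ m ≤ ((a : ℝ) + |(b : ℝ)|) ^ m * (y : ℝ) ^ m := by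
    push_cast
    exact mul_add_pow_le (by exact_mod_cast ha.le) (by exact_mod_cast le_of_max_le_right hy) _ _
  have hbound := prod_offDiag_norm_sub_le (by simpa using hn) r
    (B := 2 * (((a : ℝ) + |(b : ℝ)|) ^ m * (y : ℝ) ^ m)) fun i => by
      rw [Fintype.card_fin, ← hPdeg]
      refine (hroots (r i) ?_).trans (by linarith)
      exact (mem_aroots.1 (hr ▸ Multiset.mem_map_of_mem r (mem_univ i))).2
  rw [hg.leadingCoeff, Complex.ofReal_one, one_pow, one_mul, norm_prod]
  simp only [Fintype.card_fin] at hbound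
  refine hbound.trans_eq ?_
  ring

open Polynomial in
/-- For fixed positive integers `a, b`, `c₁ < ⋯ < c_n` and `m > 1`, for `y` sufficiently
large the real polynomial `g_y(x) = x(ay+b)^m + ∏ (x − c_i^m)` is separable, has exactly
one real root if `n` is odd and exactly two if `n` is even, and its discriminant
(expressed via the complex roots `r₁, …, r_n` as `lc^{2n−2} ∏_{i≠j} (r_i − r_j)`) is
`O(y^{mn})`. -/
theorem stmt_18 (m n : ℕ) (hm : 1 < m) (hn : 1 < n)
    (a b : ℤ) (ha : 0 < a) (hb : 0 < b)
    (c : Fin n → ℤ) (hc : ∀ i, 0 < c i) (hmono : StrictMono c) :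
    ∃ (C : ℝ) (y₀ : ℕ), ∀ y : ℕ, y₀ ≤ y →
      let g : Polynomial ℝ :=
        Polynomial.X * Polynomial.C (((a * y + b : ℤ) : ℝ) ^ m) +
          ∏ i, (Polynomial.X - Polynomial.C ((c i : ℝ) ^ m))
      Squarefree g ∧
      (Multiset.card g.roots = if Odd n then 1 else 2) ∧
      ∃ r : Fin n → ℂ,
        (g.map (algebraMap ℝ ℂ)).roots = Multiset.map r Finset.univ.val ∧
        ‖(g.leadingCoeff : ℂ) ^ (2 * n - 2) *
            ∏ p ∈ (Finset.univ : Finset (Fin n)).offDiag, (r p.1 - r p.2)‖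
          ≤ C * (y : ℝ) ^ (m * n) :=
  stmt_18_general m n hm hn a b ha c
end
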